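/- arXiv:2301.11860 — 11 statements merged into one kernel-verified Lean document; each statement's English description precedes it below -/
import Mathlib

section
/- Let S, T, B be groupoids, f : S ⥤ B and g : T ⥤ B functors, and let S ×_B T be the pullback groupoid with projections pl and pr. Then the cospan (f, g) satisfies the bipullback condition if and only if the pullback square has the pseudocone lifting property: for every groupoid X, all functors h : X ⥤ S and k : X ⥤ T, and every natural isomorphism ν : f ∘ h ≅ g ∘ k, there exist a functor m : X ⥤ S ×_B T and natural isomorphisms α : h ≅ pl ∘ m and β : pr ∘ m ≅ k such that for every object x of X one has ν_x = g(β_x) ∘ f(α_x). -/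
open CategoryTheory

universe u

namespace ThinSpan

variable {S T B : Type u} [Groupoid.{u} S] [Groupoid.{u} T] [Groupoid.{u} B]

/-- The (strict) pullback groupoid of a cospan of groupoids: objects are pairs
`(s, t)` with `f.obj s = g.obj t`. -/
structure PB (f : S ⥤ B) (g : T ⥤ B) : Type u where
  s : S
  t : T
  eq : f.obj s = g.obj t

namespace PB

variable {f : S ⥤ B} {g : T ⥤ B}

/-- Morphisms of the pullback groupoid: pairs `(φ, ψ)` with `f.map φ = g.map ψ`
(modulo the identifications of the endpoints). -/
@[ext]
structure Hom (x y : PB f g) : Type u where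
  l : x.s ⟶ y.s
  r : x.t ⟶ y.t
  comm : f.map l ≫ eqToHom y.eq = eqToHom x.eq ≫ g.map r

instance category : Category.{u} (PB f g) where
  Hom := Hom
  id x := ⟨𝟙 x.s, 𝟙 x.t, by simp⟩
  comp u v := ⟨u.l ≫ v.l, u.r ≫ v.r, by
    rw [Functor.map_comp, Functor.map_comp, Category.assoc, v.comm, ← Category.assoc,
      u.comm, Category.assoc]⟩
  id_comp u := by apply Hom.ext <;> simp
  comp_id u := by apply Hom.ext <;> simp
  assoc u v w := by apply Hom.ext <;> simp

@[simp] theorem id_l (x : PB f g) : (𝟙 x : Hom x x).l = 𝟙 x.s := rfl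
@[simp] theorem id_r (x : PB f g) : (𝟙 x : Hom x x).r = 𝟙 x.t := rfl
@[simp] theorem comp_l {x y z : PB f g} (u : x ⟶ y) (v : y ⟶ z) :
    (u ≫ v : Hom x z).l = u.l ≫ v.l := rfl
@[simp] theorem comp_r {x y z : PB f g} (u : x ⟶ y) (v : y ⟶ z) :
    (u ≫ v : Hom x z).r = u.r ≫ v.r := rfl

instance groupoid : Groupoid.{u} (PB f g) where
  inv u := ⟨Groupoid.inv u.l, Groupoid.inv u.r, by
    rw [Groupoid.inv_eq_inv, Groupoid.inv_eq_inv, Functor.map_inv, Functor.map_inv,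
      IsIso.inv_comp_eq, ← Category.assoc, IsIso.eq_comp_inv]
    exact u.comm.symm⟩
  inv_comp u := by apply Hom.ext <;> simp [Groupoid.inv_eq_inv]
  comp_inv u := by apply Hom.ext <;> simp [Groupoid.inv_eq_inv]

/-- First projection of the pullback groupoid. -/
def pl (f : S ⥤ B) (g : T ⥤ B) : PB f g ⥤ S where
  obj x := x.s
  map u := u.l

/-- Second projection of the pullback groupoid. -/
def pr (f : S ⥤ B) (g : T ⥤ B) : PB f g ⥤ T where
  obj x := x.t
  map u := u.r

end PB

/-- The bipullback condition for a cospan of groupoids: every "reindexing problem"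
`θ : f s ⟶ g t` has a solution. -/
def BipullbackCond (f : S ⥤ B) (g : T ⥤ B) : Prop :=
  ∀ (s : S) (t : T) (θ : f.obj s ⟶ g.obj t),
    ∃ (s' : S) (t' : T) (φ : s ⟶ s') (ψ : t' ⟶ t) (e : f.obj s' = g.obj t'),
      θ = f.map φ ≫ eqToHom e ≫ g.map ψ



/-- A prestrategy on a groupoid `A`: a groupoid together with a display functor to `A`. -/
structure Prestrat (A : Type u) [Groupoid.{u} A] : Type (u + 1) where
  C : Type u
  [grpd : Groupoid.{u} C]
  disp : C ⥤ A

attribute [instance] Prestrat.grpd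

variable {A B C : Type u} [Groupoid.{u} A] [Groupoid.{u} B] [Groupoid.{u} C]

/-- Uniform orthogonality of prestrategies: the pullback of the display maps is a
bipullback. -/
def Perp (σ τ : Prestrat A) : Prop :=
  BipullbackCond σ.disp τ.disp

/-- The uniform orthogonal of a set of prestrategies. -/
def perpSet (Ss : Set (Prestrat A)) : Set (Prestrat A) :=
  {τ | ∀ σ ∈ Ss, Perp σ τ}

/-- The identity prestrategy `(A, id_A)` on `A`. -/
def idPre (A : Type u) [Groupoid.{u} A] : Prestrat A :=
  ⟨A, 𝟭 A⟩

/-- The identity span on `A`, as a prestrategy from `A` to `A`. -/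
def idSpan (A : Type u) [Groupoid.{u} A] : Prestrat (A × A) :=
  ⟨A, Functor.prod' (𝟭 A) (𝟭 A)⟩

/-- Product of prestrategies. -/
def prodPre (σ : Prestrat A) (τ : Prestrat B) : Prestrat (A × B) :=
  ⟨σ.C × τ.C, σ.disp.prod τ.disp⟩

/-- The left display component of a prestrategy from `A` to `B`. -/
def dl (σ : Prestrat (A × B)) : σ.C ⥤ A :=
  σ.disp ⋙ CategoryTheory.Prod.fst A B

/-- The right display component of a prestrategy from `A` to `B`. -/
def dr (σ : Prestrat (A × B)) : σ.C ⥤ B :=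
  σ.disp ⋙ CategoryTheory.Prod.snd A B

/-- The set `U_{A ⊸ B}` of uniform prestrategies from `(A, UA)` to `(B, UB)`. -/
def ULin (UA : Set (Prestrat A)) (UB : Set (Prestrat B)) : Set (Prestrat (A × B)) :=
  {τ | ∀ σ ∈ UA, ∀ υ ∈ perpSet UB, Perp τ (prodPre σ υ)}

/-- The application `T @ S` of a prestrategy `T` from `A` to `B` to a prestrategy `S`
on `A`. -/
def appPre (σ : Prestrat A) (τ : Prestrat (A × B)) : Prestrat B :=
  ⟨PB σ.disp (dl τ), PB.pr σ.disp (dl τ) ⋙ dr τ⟩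

/-- The composition `T ⊙ S` of spans/prestrategies. -/
def compPre (σ : Prestrat (A × B)) (τ : Prestrat (B × C)) : Prestrat (A × C) :=
  ⟨PB (dr σ) (dl τ),
    Functor.prod' (PB.pl (dr σ) (dl τ) ⋙ dl σ) (PB.pr (dr σ) (dl τ) ⋙ dr τ)⟩

/-- A wide subgroupoid of a groupoid `A`: a class of morphisms containing identities and
closed under composition and inverses (with all objects of `A`). -/
structure WideSub (A : Type u) [Groupoid.{u} A] : Type u where
  mem : ∀ {a b : A}, (a ⟶ b) → Prop
  id_mem : ∀ a : A, mem (𝟙 a)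
  comp_mem : ∀ {a b c : A} {f : a ⟶ b} {g : b ⟶ c}, mem f → mem g → mem (f ≫ g)
  inv_mem : ∀ {a b : A} {f : a ⟶ b}, mem f → mem (Groupoid.inv f)

namespace WideSub

/-- The underlying type of objects of a wide subgroupoid (the same objects as `A`). -/
@[ext]
structure Obj {A : Type u} [Groupoid.{u} A] (W : WideSub A) : Type u where
  pt : A

variable {A : Type u} [Groupoid.{u} A] (W : WideSub A)

instance : Groupoid.{u} W.Obj where
  Hom x y := {f : x.pt ⟶ y.pt // W.mem f}
  id x := ⟨𝟙 x.pt, W.id_mem x.pt⟩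
  comp u v := ⟨u.1 ≫ v.1, W.comp_mem u.2 v.2⟩
  id_comp u := Subtype.ext (Category.id_comp u.1)
  comp_id u := Subtype.ext (Category.comp_id u.1)
  assoc u v w := Subtype.ext (Category.assoc u.1 v.1 w.1)
  inv u := ⟨Groupoid.inv u.1, W.inv_mem u.2⟩
  inv_comp u := Subtype.ext (Groupoid.inv_comp u.1)
  comp_inv u := Subtype.ext (Groupoid.comp_inv u.1)

/-- The inclusion functor of a wide subgroupoid. -/
def incl : W.Obj ⥤ A where
  obj x := x.pt
  map u := u.1

/-- The inclusion of a wide subgroupoid, seen as a prestrategy on `A`. -/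
def pre : Prestrat A :=
  ⟨W.Obj, W.incl⟩

end WideSub

/-- A groupoid is discrete when all of its morphisms are identities. -/
def IsDiscreteGpd (P : Type u) [Groupoid.{u} P] : Prop :=
  ∀ {x y : P} (u : x ⟶ y), ∃ h : x = y, u = CategoryTheory.eqToHom h

/-- Thin orthogonality: uniform orthogonality together with discreteness of the
pullback groupoid. -/
def TPerp (σ τ : Prestrat A) : Prop :=
  Perp σ τ ∧ IsDiscreteGpd (PB σ.disp τ.disp)

/-- The thin orthogonal of a class `Ss` of prestrategies, relative to the ambient
uniform structure `U` (so that the result is a subset of `U ⊥`). -/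
def tperpSet (U : Set (Prestrat A)) (Ss : Set (Prestrat A)) : Set (Prestrat A) :=
  {τ | τ ∈ perpSet U ∧ ∀ σ ∈ Ss, TPerp σ τ}

/-- The set `T_{A ⊸ B}` of thin prestrategies (strategies) from a thin groupoid
`(A, A₋, A₊, U_A, T_A)` to `(B, B₋, B₊, U_B, T_B)`. -/
def TLin (UA TA : Set (Prestrat A)) (UB TB : Set (Prestrat B)) :
    Set (Prestrat (A × B)) :=
  {τ | τ ∈ ULin UA UB ∧ ∀ σ ∈ TA, ∀ υ ∈ tperpSet UB TB, TPerp τ (prodPre σ υ)}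

end ThinSpan
namespace ThinSpan

/-- A pullback square of groupoids is a bipullback iff all reindexing problems have
solutions iff it has the pseudocone lifting property. -/
theorem bipullbackCond_iff_pseudocone_lifting
    {S T B : Type u} [Groupoid.{u} S] [Groupoid.{u} T] [Groupoid.{u} B]
    (f : S ⥤ B) (g : T ⥤ B) :
    BipullbackCond f g ↔
      ∀ (X : Type u) [Groupoid.{u} X] (h : X ⥤ S) (k : X ⥤ T)
        (ν : h ⋙ f ≅ k ⋙ g),
        ∃ (m : X ⥤ PB f g) (α : h ≅ m ⋙ PB.pl f g) (β : m ⋙ PB.pr f g ≅ k),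
          ∀ x : X,
            ν.hom.app x =
              f.map (α.hom.app x) ≫ eqToHom (m.obj x).eq ≫ g.map (β.hom.app x) := by
  constructor
  · intro hb X _ h k ν
    have H := fun x : X => hb (h.obj x) (k.obj x) (ν.hom.app x)
    choose s' t' φ ψ e hθ using H
    have key : ∀ {x y : X} (u : x ⟶ y),
        f.map (Groupoid.inv (φ x) ≫ h.map u ≫ φ y) ≫ eqToHom (e y) =
          eqToHom (e x) ≫ g.map (ψ x ≫ k.map u ≫ Groupoid.inv (ψ y)) := by
      intro x y u
      have nat : f.map (h.map u) ≫ ν.hom.app y = ν.hom.app x ≫ g.map (k.map u) :=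
        ν.hom.naturality u
      have ex : eqToHom (e x) = inv (f.map (φ x)) ≫ ν.hom.app x ≫ inv (g.map (ψ x)) := by
        rw [hθ x]; simp
      have ey : eqToHom (e y) = inv (f.map (φ y)) ≫ ν.hom.app y ≫ inv (g.map (ψ y)) := by
        rw [hθ y]; simp
      rw [ex, ey]
      simp only [Functor.map_comp, Groupoid.inv_eq_inv, Functor.map_inv, Category.assoc,
        IsIso.hom_inv_id_assoc, IsIso.inv_hom_id_assoc]
      rw [reassoc_of% nat]
    let m : X ⥤ PB f g :=
      { obj := fun x => ⟨s' x, t' x, e x⟩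
        map := fun {x y} u =>
          ⟨Groupoid.inv (φ x) ≫ h.map u ≫ φ y, ψ x ≫ k.map u ≫ Groupoid.inv (ψ y), key u⟩
        map_id := fun x => by apply PB.Hom.ext <;> simp
        map_comp := fun {x y z} u v => by apply PB.Hom.ext <;> simp }
    refine ⟨m, NatIso.ofComponents (fun x => @asIso _ _ _ _ (φ x) (IsIso.of_groupoid _)) ?_,
      NatIso.ofComponents (fun x => @asIso _ _ _ _ (ψ x) (IsIso.of_groupoid _)) ?_, ?_⟩
    · intro x y u
      show h.map u ≫ φ y = φ x ≫ (Groupoid.inv (φ x) ≫ h.map u ≫ φ y)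
      simp
    · intro x y u
      show (ψ x ≫ k.map u ≫ Groupoid.inv (ψ y)) ≫ ψ y = ψ x ≫ k.map u
      simp
    · intro x
      exact hθ x
  · intro hl s t θ
    let h : Discrete PUnit.{u + 1} ⥤ S := (Functor.const _).obj s
    let k : Discrete PUnit.{u + 1} ⥤ T := (Functor.const _).obj t
    let ν : h ⋙ f ≅ k ⋙ g :=
      NatIso.ofComponents (fun _ => asIso θ) (by
        rintro ⟨⟨⟩⟩ ⟨⟨⟩⟩ u
        have : u = 𝟙 _ := rfl
        subst this
        simp [h, k])
    obtain ⟨m, α, β, hmx⟩ := hl (Discrete PUnit.{u + 1}) h k ν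
    refine ⟨(m.obj ⟨PUnit.unit⟩).s, (m.obj ⟨PUnit.unit⟩).t,
      α.hom.app ⟨PUnit.unit⟩, β.hom.app ⟨PUnit.unit⟩, (m.obj ⟨PUnit.unit⟩).eq, ?_⟩
    have := hmx ⟨PUnit.unit⟩
    simp [ν] at this
    exact this

end ThinSpan
end

section
/- Let A, B, C, R be groupoids and f : A ⥤ B, g : B ⥤ C, h : R ⥤ C functors. Let M = B ×_C R be the pullback groupoid of the cospan (g, h), with projection π_B : M ⥤ B. If the cospan (g ∘ f, h) satisfies the bipullback condition, then the cospan (f, π_B) satisfies the bipullback condition. -/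
open CategoryTheory

universe u

namespace ThinSpan

/-- If the outer rectangle of two pullback squares of groupoids is a bipullback, then
the left square is a bipullback. -/
theorem bipullback_of_rect
    {A B C R : Type u} [Groupoid.{u} A] [Groupoid.{u} B] [Groupoid.{u} C] [Groupoid.{u} R]
    (f : A ⥤ B) (g : B ⥤ C) (h : R ⥤ C)
    (H : BipullbackCond (f ⋙ g) h) :
    BipullbackCond f (PB.pl g h) := by
  intro a m θ
  obtain ⟨a', t', φ, ψr, e, he⟩ := H a m.t (g.map θ ≫ eqToHom m.eq)
  refine ⟨a', ⟨f.obj a', t', e⟩,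
    φ, ⟨Groupoid.inv (f.map φ) ≫ θ, ψr, ?_⟩, rfl, ?_⟩
  · simp only [Functor.map_comp, Category.assoc]
    erw [Functor.map_comp, Category.assoc, he]
    simp [← Category.assoc, ← Functor.map_comp]
  · simp [PB.pl]
    rfl

end ThinSpan
end

section
/- Let A, B, C, R be groupoids and f : A ⥤ B, g : B ⥤ C, h : R ⥤ C functors. Let M = B ×_C R be the pullback groupoid of the cospan (g, h), with projection π_B : M ⥤ B. If the cospans (f, π_B) and (g, h) both satisfy the bipullback condition, then the cospan (g ∘ f, h) satisfies the bipullback condition. -/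
open CategoryTheory

universe u

namespace ThinSpan

/-- If the left and right squares of a rectangle of pullbacks of groupoids are
bipullbacks, then so is the whole rectangle. -/
theorem bipullback_rect_of_squares
    {A B C R : Type u} [Groupoid.{u} A] [Groupoid.{u} B] [Groupoid.{u} C] [Groupoid.{u} R]
    (f : A ⥤ B) (g : B ⥤ C) (h : R ⥤ C)
    (H1 : BipullbackCond f (PB.pl g h)) (H2 : BipullbackCond g h) :
    BipullbackCond (f ⋙ g) h := by
  intro a r θ
  obtain ⟨b', r', φ, ψ, e, hθ⟩ := H2 (f.obj a) r θ
  let m : PB g h := ⟨b', r', e⟩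
  obtain ⟨a', m', φ', ψ', e', hφ⟩ := H1 a m φ
  refine ⟨a', m'.t, φ', ψ'.r ≫ ψ, ?_, ?_⟩
  · show g.obj (f.obj a') = h.obj m'.t
    rw [show (PB.pl g h).obj m' = m'.s from rfl] at e'
    rw [e', m'.eq]
  · have comm := ψ'.comm
    rw [show m.eq = e from rfl] at comm
    change φ = f.map φ' ≫ eqToHom (show f.obj a' = m'.s from e') ≫ ψ'.l at hφ
    rw [hθ, hφ]
    simp only [Functor.comp_map, Functor.map_comp, Category.assoc, eqToHom_map]
    rw [← Category.assoc (g.map ψ'.l), comm]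
    simp

end ThinSpan
end

section
/- Let L, M, R, A, B be groupoids with functors fLA : L ⥤ A, fMA : M ⥤ A, fMB : M ⥤ B, fRB : R ⥤ B. Let P = L ×_A M be the pullback groupoid of (fLA, fMA), Q = M ×_B R the pullback groupoid of (fMB, fRB), and S = P ×_M Q the pullback groupoid of the cospan (pr : P ⥤ M, pl : Q ⥤ M). Then: (0) the square with vertex S, horizontal side the common composite functor S ⥤ M, vertical side ⟨pl ∘ pl, pr ∘ pr⟩ : S ⥤ L × R, and with ⟨fMA, fMB⟩ : M ⥤ A × B and fLA × fRB : L × R ⥤ A × B, commutes, and the canonical comparison functor from S to the pullback groupoid of the cospan (⟨fMA, fMB⟩, fLA × fRB) is an isomorphism of groupoids; (i) if the cospans (fLA, fMA) and (fMB ∘ pr : P ⥤ B, fRB) both satisfy the bipullback condition, then so does the cospan (⟨fMA, fMB⟩, fLA × fRB); (ii) if the cospans (fMB, fRB) and (fMA ∘ pl : Q ⥤ A, fLA) both satisfy the bipullback condition, then so does the cospan (⟨fMA, fMB⟩, fLA × fRB); (iii) if the cospan (⟨fMA, fMB⟩, fLA × fRB) satisfies the bipullback condition, then so do the cospans (fMA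 ∘ pl : Q ⥤ A, fLA) and (fMB ∘ pr : P ⥤ B, fRB). -/
open CategoryTheory

universe u

namespace ThinSpan


section ThreeTilesAux

variable {C D : Type u} [Category.{u} C] [Category.{u} D]

@[simp] lemma prod_eqToHom_fst {A B : Type u} [Category.{u} A] [Category.{u} B]
    {X Y : A × B} (h : X = Y) :
    (eqToHom h).1 = eqToHom (congrArg Prod.fst h) := by subst h; rfl

@[simp] lemma prod_eqToHom_snd {A B : Type u} [Category.{u} A] [Category.{u} B]
    {X Y : A × B} (h : X = Y) :
    (eqToHom h).2 = eqToHom (congrArg Prod.snd h) := by subst h; rfl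

lemma sq_swap {a a' b b' : C} {p : a = a'} {q : b = b'} {f : a ⟶ b} {g : a' ⟶ b'}
    (h : f ≫ eqToHom q = eqToHom p ≫ g) :
    g ≫ eqToHom q.symm = eqToHom p.symm ≫ f := by
  subst p; subst q; simpa using h.symm

lemma sq_trans {a a' a'' b b' b'' : C} {p : a = a'} {q : b = b'} {p' : a' = a''}
    {q' : b' = b''} {f : a ⟶ b} {g : a' ⟶ b'} {k : a'' ⟶ b''}
    (h1 : f ≫ eqToHom q = eqToHom p ≫ g) (h2 : g ≫ eqToHom q' = eqToHom p' ≫ k) :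
    f ≫ eqToHom (q.trans q') = eqToHom (p.trans p') ≫ k := by
  subst p; subst q; subst p'; subst q'
  simp only [eqToHom_refl, Category.comp_id, Category.id_comp] at h1 h2 ⊢
  rw [h1, h2]

lemma sq_map (F : C ⥤ D) {a a' b b' : C} {p : a = a'} {q : b = b'}
    {f : a ⟶ b} {g : a' ⟶ b'} (h : f ≫ eqToHom q = eqToHom p ≫ g) :
    F.map f ≫ eqToHom (congrArg F.obj q) = eqToHom (congrArg F.obj p) ≫ F.map g := by
  subst p; subst q
  simp only [eqToHom_refl, Category.comp_id, Category.id_comp] at h ⊢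
  rw [h]

lemma conj_of_sq {a a' b b' : C} {p : a = a'} {q : b = b'} {f : a ⟶ b} {g : a' ⟶ b'}
    (h : f ≫ eqToHom q = eqToHom p ≫ g) :
    f = eqToHom p ≫ g ≫ eqToHom q.symm := by
  subst p; subst q; simpa using h

lemma prod_comp_eqToHom {A B : Type u} [Category.{u} A] [Category.{u} B]
    {X Y Z : A × B} (f : X ⟶ Y) (h : Y = Z) :
    f ≫ eqToHom h =
      (f.1 ≫ eqToHom (congrArg Prod.fst h), f.2 ≫ eqToHom (congrArg Prod.snd h)) := by
  subst h; simp

lemma eqToHom_comp_prod {A B : Type u} [Category.{u} A] [Category.{u} B]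
    {X Y Z : A × B} (h : X = Y) (f : Y ⟶ Z) :
    eqToHom h ≫ f =
      (eqToHom (congrArg Prod.fst h) ≫ f.1, eqToHom (congrArg Prod.snd h) ≫ f.2) := by
  subst h; simp

lemma PB_ext {S T B : Type u} [Groupoid.{u} S] [Groupoid.{u} T] [Groupoid.{u} B]
    {f : S ⥤ B} {g : T ⥤ B} {x y : PB f g} (h1 : x.s = y.s) (h2 : x.t = y.t) : x = y := by
  cases x; cases y; cases h1; cases h2; rfl

section Comparison

variable {L M R A B : Type u} [Groupoid.{u} L] [Groupoid.{u} M] [Groupoid.{u} R]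
    [Groupoid.{u} A] [Groupoid.{u} B]
    (fLA : L ⥤ A) (fMA : M ⥤ A) (fMB : M ⥤ B) (fRB : R ⥤ B)

/-- The objectwise compatibility for the comparison functor. -/
lemma comparison_obj_eq (x : PB (PB.pr fLA fMA) (PB.pl fMB fRB)) :
    (Functor.prod' fMA fMB).obj x.s.t = (fLA.prod fRB).obj (x.s.s, x.t.t) := by
  have h1 : fMA.obj x.s.t = fLA.obj x.s.s := x.s.eq.symm
  have h2 : fMB.obj x.s.t = fRB.obj x.t.t := by
    rw [show x.s.t = x.t.s from x.eq]; exact x.t.eq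
  exact Prod.ext h1 h2

/-- The morphismwise compatibility for the comparison functor. -/
lemma comparison_map_comm {x y : PB (PB.pr fLA fMA) (PB.pl fMB fRB)} (u : x ⟶ y) :
    (Functor.prod' fMA fMB).map u.l.r ≫ eqToHom (comparison_obj_eq fLA fMA fMB fRB y) =
      eqToHom (comparison_obj_eq fLA fMA fMB fRB x) ≫ (fLA.prod fRB).map (u.l.l, u.r.r) := by
  rw [prod_comp_eqToHom, eqToHom_comp_prod, Prod.mk.injEq]
  exact ⟨sq_swap u.l.comm, sq_trans (sq_map fMB u.comm) u.r.comm⟩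

/-- The canonical comparison functor. -/
def comparison : PB (PB.pr fLA fMA) (PB.pl fMB fRB) ⥤
    PB (Functor.prod' fMA fMB) (fLA.prod fRB) where
  obj x := ⟨x.s.t, (x.s.s, x.t.t), comparison_obj_eq fLA fMA fMB fRB x⟩
  map u := ⟨u.l.r, (u.l.l, u.r.r), comparison_map_comm fLA fMA fMB fRB u⟩
  map_id x := by apply PB.Hom.ext <;> simp
  map_comp u v := by apply PB.Hom.ext <;> simp

/-- Splitting a factorization equation in a product category into components. -/
lemma prod_factor {A B : Type u} [Category.{u} A] [Category.{u} B]
    {x1 y1 z1 w1 : A} {x2 y2 z2 w2 : B}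
    (θ : ((x1, x2) : A × B) ⟶ (w1, w2)) (f : ((x1, x2) : A × B) ⟶ (y1, y2))
    (h : ((y1, y2) : A × B) = (z1, z2)) (g : ((z1, z2) : A × B) ⟶ (w1, w2))
    (h1 : θ.1 = f.1 ≫ eqToHom (congrArg Prod.fst h) ≫ g.1)
    (h2 : θ.2 = f.2 ≫ eqToHom (congrArg Prod.snd h) ≫ g.2) :
    θ = f ≫ eqToHom h ≫ g := by
  have e1 : y1 = z1 := congrArg Prod.fst h
  have e2 : y2 = z2 := congrArg Prod.snd h
  subst e1; subst e2
  show θ = f ≫ eqToHom rfl ≫ g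
  simp only [eqToHom_refl, Category.id_comp]
  simp only [eqToHom_refl, Category.id_comp, Category.comp_id] at h1 h2
  apply Prod.ext
  · simpa using h1
  · simpa using h2

/-- The inverse on morphisms of the comparison functor. -/
def comparisonInvMap {x y : PB (PB.pr fLA fMA) (PB.pl fMB fRB)}
    (v : (comparison fLA fMA fMB fRB).obj x ⟶ (comparison fLA fMA fMB fRB).obj y) :
    x ⟶ y :=
  ⟨⟨v.r.1, v.l, by
      have hc := v.comm
      rw [prod_comp_eqToHom, eqToHom_comp_prod, Prod.mk.injEq] at hc
      exact sq_swap hc.1⟩,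
   ⟨eqToHom (show x.t.s = x.s.t from x.eq.symm) ≫ v.l ≫
        eqToHom (show y.s.t = y.t.s from y.eq), v.r.2, by
      have hc := v.comm
      rw [prod_comp_eqToHom, eqToHom_comp_prod, Prod.mk.injEq] at hc
      have S1 : (eqToHom (show x.t.s = x.s.t from x.eq.symm) ≫ v.l ≫
            eqToHom (show y.s.t = y.t.s from y.eq)) ≫
            eqToHom (show y.t.s = y.s.t from y.eq.symm) =
          eqToHom (show x.t.s = x.s.t from x.eq.symm) ≫ v.l := by
          simp
          erw [Category.assoc, eqToHom_trans, eqToHom_refl, Category.comp_id]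
          rfl
      exact sq_trans (sq_map fMB S1) hc.2⟩,
   by
      show v.l ≫ eqToHom y.eq = eqToHom x.eq ≫ eqToHom x.eq.symm ≫ v.l ≫ eqToHom y.eq
      simp
      rfl⟩

end Comparison

end ThreeTilesAux

/-- The three-tiles lemma on pullbacks and bipullbacks of groupoids. -/
theorem three_tiles
    {L M R A B : Type u} [Groupoid.{u} L] [Groupoid.{u} M] [Groupoid.{u} R]
    [Groupoid.{u} A] [Groupoid.{u} B]
    (fLA : L ⥤ A) (fMA : M ⥤ A) (fMB : M ⥤ B) (fRB : R ⥤ B) :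
    -- (0) the induced square commutes ...
    ((PB.pl (PB.pr fLA fMA) (PB.pl fMB fRB) ⋙ PB.pr fLA fMA) ⋙ Functor.prod' fMA fMB =
      Functor.prod'
          (PB.pl (PB.pr fLA fMA) (PB.pl fMB fRB) ⋙ PB.pl fLA fMA)
          (PB.pr (PB.pr fLA fMA) (PB.pl fMB fRB) ⋙ PB.pr fMB fRB) ⋙ fLA.prod fRB) ∧
    -- ... and the canonical comparison functor is an isomorphism of groupoids
    (∃ Φ : PB (PB.pr fLA fMA) (PB.pl fMB fRB) ⥤ PB (Functor.prod' fMA fMB) (fLA.prod fRB),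
        Φ ⋙ PB.pl (Functor.prod' fMA fMB) (fLA.prod fRB) =
          PB.pl (PB.pr fLA fMA) (PB.pl fMB fRB) ⋙ PB.pr fLA fMA ∧
        Φ ⋙ PB.pr (Functor.prod' fMA fMB) (fLA.prod fRB) =
          Functor.prod' (PB.pl (PB.pr fLA fMA) (PB.pl fMB fRB) ⋙ PB.pl fLA fMA)
            (PB.pr (PB.pr fLA fMA) (PB.pl fMB fRB) ⋙ PB.pr fMB fRB) ∧
        Function.Bijective Φ.obj ∧
        ∀ (x y : PB (PB.pr fLA fMA) (PB.pl fMB fRB)),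
          Function.Bijective (fun u : x ⟶ y => Φ.map u)) ∧
    -- (i)
    (BipullbackCond fLA fMA → BipullbackCond (PB.pr fLA fMA ⋙ fMB) fRB →
      BipullbackCond (Functor.prod' fMA fMB) (fLA.prod fRB)) ∧
    -- (ii)
    (BipullbackCond fMB fRB → BipullbackCond (PB.pl fMB fRB ⋙ fMA) fLA →
      BipullbackCond (Functor.prod' fMA fMB) (fLA.prod fRB)) ∧
    -- (iii)
    (BipullbackCond (Functor.prod' fMA fMB) (fLA.prod fRB) →
      BipullbackCond (PB.pl fMB fRB ⋙ fMA) fLA ∧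
        BipullbackCond (PB.pr fLA fMA ⋙ fMB) fRB) := by
  refine ⟨?_, ⟨comparison fLA fMA fMB fRB, rfl, rfl, ?_, ?_⟩, ?_, ?_, ?_⟩
  · -- (0a) the square commutes
    exact CategoryTheory.Functor.ext (fun x => comparison_obj_eq fLA fMA fMB fRB x)
      (fun x y u => conj_of_sq (comparison_map_comm fLA fMA fMB fRB u))
  · -- (0b) object bijectivity
    refine Function.bijective_iff_has_inverse.mpr
      ⟨fun y => ⟨⟨y.t.1, y.s, (congrArg _root_.Prod.fst y.eq).symm⟩,
        ⟨y.s, y.t.2, congrArg _root_.Prod.snd y.eq⟩, rfl⟩, fun x => ?_, fun y => ?_⟩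
    · exact PB_ext (PB_ext rfl rfl) (PB_ext x.eq rfl)
    · exact PB_ext rfl rfl
  · -- (0c) morphism bijectivity
    intro x y
    refine Function.bijective_iff_has_inverse.mpr
      ⟨fun v => comparisonInvMap fLA fMA fMB fRB v, fun u => ?_, fun v => ?_⟩
    · apply PB.Hom.ext
      · apply PB.Hom.ext
        · rfl
        · rfl
      · apply PB.Hom.ext
        · have hu : u.l.r ≫ eqToHom (show y.s.t = y.t.s from y.eq) =
              eqToHom (show x.s.t = x.t.s from x.eq) ≫ u.r.l := u.comm
          show eqToHom _ ≫ u.l.r ≫ eqToHom _ = u.r.l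
          rw [conj_of_sq hu]
          simp
        · rfl
    · apply PB.Hom.ext
      · rfl
      · rfl
  · -- (i)
    intro BP1 BP2 m lr θ
    obtain ⟨l, r⟩ := lr
    obtain ⟨l', m', φ, ψ, e, he⟩ := BP1 l m (Groupoid.inv θ.1)
    obtain ⟨p'', r', φP, ψR, e2, he2⟩ := BP2 ⟨l', m', e⟩ r (fMB.map ψ ≫ θ.2)
    have hP : fLA.map φP.l ≫ eqToHom p''.eq = eqToHom e ≫ fMA.map φP.r := φP.comm
    have he2' : fMB.map ψ ≫ θ.2 = fMB.map φP.r ≫ eqToHom e2 ≫ fRB.map ψR := he2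
    refine ⟨p''.t, (p''.s, r'), Groupoid.inv ψ ≫ φP.r,
      (Groupoid.inv φP.l ≫ Groupoid.inv φ, ψR), Prod.ext p''.eq.symm e2, ?_⟩
    have h1 : θ.1 = fMA.map (Groupoid.inv ψ) ≫ eqToHom e.symm ≫ fLA.map (Groupoid.inv φ) := by
      have h := congrArg Groupoid.inv he
      simp only [Groupoid.inv_eq_inv, IsIso.inv_comp, Functor.map_inv, inv_eqToHom,
        Category.assoc, IsIso.inv_inv] at h
      simpa [Groupoid.inv_eq_inv] using h
    have h2 : θ.2 = fMB.map (Groupoid.inv ψ) ≫ fMB.map φP.r ≫ eqToHom e2 ≫ fRB.map ψR := by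
      rw [← he2']
      simp [Groupoid.inv_eq_inv]
    refine prod_factor θ _ _ _ ?_ ?_
    · rw [h1]
      simp only [Functor.prod'_map, Functor.prod_map, Functor.map_comp, Category.assoc]
      rw [conj_of_sq (sq_swap hP)]
      simp [Groupoid.inv_eq_inv]
    · rw [h2]
      simp [Functor.map_comp]
  · -- (ii)
    intro BP1 BP2 m lr θ
    obtain ⟨l, r⟩ := lr
    obtain ⟨m', r', φM, ψR, e, he⟩ := BP1 m r θ.2
    obtain ⟨q'', l', φQ, ψL, e2, he2⟩ := BP2 ⟨m', r', e⟩ l (fMA.map (Groupoid.inv φM) ≫ θ.1)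
    have hQ : fMB.map φQ.l ≫ eqToHom q''.eq = eqToHom e ≫ fRB.map φQ.r := φQ.comm
    have he2' : fMA.map (Groupoid.inv φM) ≫ θ.1 =
        fMA.map φQ.l ≫ eqToHom e2 ≫ fLA.map ψL := he2
    refine ⟨q''.s, (l', q''.t), φM ≫ φQ.l,
      (ψL, Groupoid.inv φQ.r ≫ ψR), Prod.ext e2 q''.eq, ?_⟩
    have h1 : θ.1 = fMA.map φM ≫ fMA.map φQ.l ≫ eqToHom e2 ≫ fLA.map ψL := by
      rw [← he2']
      simp [Groupoid.inv_eq_inv]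
    refine prod_factor θ _ _ _ ?_ ?_
    · rw [h1]
      simp [Functor.map_comp]
    · rw [he]
      simp only [Functor.prod'_map, Functor.prod_map, Functor.map_comp, Category.assoc]
      rw [conj_of_sq hQ]
      simp [Groupoid.inv_eq_inv]
  · -- (iii)
    intro BP
    constructor
    · intro q l θ
      obtain ⟨m', lr', φM, ψ, e, he⟩ := BP q.s (l, q.t) (θ, eqToHom q.eq)
      obtain ⟨l', r'⟩ := lr'
      have he1 : θ = fMA.map φM ≫ eqToHom (congrArg _root_.Prod.fst e) ≫ fLA.map ψ.1 := by
        have := congrArg _root_.Prod.fst he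
        simp at this; exact this
      have he2 : eqToHom q.eq = fMB.map φM ≫ eqToHom (congrArg _root_.Prod.snd e) ≫ fRB.map ψ.2 := by
        have := congrArg _root_.Prod.snd he
        simpa using this
      refine ⟨⟨m', r', congrArg _root_.Prod.snd e⟩, l', ⟨φM, Groupoid.inv ψ.2, ?_⟩, ψ.1,
        congrArg _root_.Prod.fst e, he1⟩
      show fMB.map φM ≫ eqToHom _ = eqToHom q.eq ≫ fRB.map (Groupoid.inv ψ.2)
      rw [he2]
      simp [Groupoid.inv_eq_inv]
    · intro p r θ
      obtain ⟨m', lr', φM, ψ, e, he⟩ := BP p.t (p.s, r) (eqToHom p.eq.symm, θ)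
      obtain ⟨l', r'⟩ := lr'
      have he1 : eqToHom p.eq.symm =
          fMA.map φM ≫ eqToHom (congrArg _root_.Prod.fst e) ≫ fLA.map ψ.1 := by
        have := congrArg _root_.Prod.fst he
        simpa using this
      have he2 : θ = fMB.map φM ≫ eqToHom (congrArg _root_.Prod.snd e) ≫ fRB.map ψ.2 := by
        have := congrArg _root_.Prod.snd he
        simp at this; exact this
      refine ⟨⟨l', m', (congrArg _root_.Prod.fst e).symm⟩, r', ⟨Groupoid.inv ψ.1, φM, ?_⟩, ψ.2,
        congrArg _root_.Prod.snd e, he2⟩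
      show fLA.map (Groupoid.inv ψ.1) ≫ eqToHom _ = eqToHom p.eq ≫ fMA.map φM
      have hinv : eqToHom p.eq = fLA.map (Groupoid.inv ψ.1) ≫
          eqToHom (congrArg _root_.Prod.fst e).symm ≫ fMA.map (Groupoid.inv φM) := by
        have h := congrArg Groupoid.inv he1
        simp only [Groupoid.inv_eq_inv, IsIso.inv_comp, Functor.map_inv, inv_eqToHom, Category.assoc] at h
        simpa [Groupoid.inv_eq_inv] using h
      rw [hinv]
      simp [Groupoid.inv_eq_inv]

end ThinSpan
end

section
/- Let (A, U_A) and (B, U_B) be uniform groupoids, T a prestrategy from A to B, and 𝐒 a class of prestrategies on A with 𝐒 ⊆ U_A, (A, id_A) ∈ 𝐒, and 𝐒⊥⊥ = U_A. Then T ∈ U_{A⊸B} if and only if both: (1) for all S ∈ 𝐒, the application T@S belongs to U_B; and (2) the prestrategy (T, ∂T_A) on A belongs to U_A⊥. -/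
open CategoryTheory

universe u

namespace ThinSpan

variable {A B : Type u} [Groupoid.{u} A] [Groupoid.{u} B]

theorem eqToHom_fst' {x y : A × B} (e : x = y) :
    (eqToHom e).1 = eqToHom (congrArg Prod.fst e) := by subst e; rfl

theorem eqToHom_snd' {x y : A × B} (e : x = y) :
    (eqToHom e).2 = eqToHom (congrArg Prod.snd e) := by subst e; rfl

theorem comp_fst' {x y z : A × B} (f : x ⟶ y) (g : y ⟶ z) :
    (f ≫ g).1 = f.1 ≫ g.1 := rfl

theorem comp_snd' {x y z : A × B} (f : x ⟶ y) (g : y ⟶ z) :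
    (f ≫ g).2 = f.2 ≫ g.2 := rfl

theorem perp_symm {σ τ : Prestrat A} (h : Perp σ τ) : Perp τ σ := by
  intro t s θ
  obtain ⟨s', t', φ, ψ, e, he⟩ := h s t (Groupoid.inv θ)
  refine ⟨t', s', Groupoid.inv ψ, Groupoid.inv φ, e.symm, ?_⟩
  have h2 : θ = Groupoid.inv (Groupoid.inv θ) := by simp
  rw [h2, he]
  simp [Groupoid.inv_eq_inv]

theorem perp_id (σ : Prestrat A) : Perp σ (idPre A) :=
  fun s t θ => ⟨s, σ.disp.obj s, 𝟙 s, θ, rfl, by simp [idPre]; rfl⟩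


theorem perp_app {σ : Prestrat A} {υ : Prestrat B} {τ : Prestrat (A × B)}
    (h : Perp τ (prodPre σ υ)) : Perp υ (appPre σ τ) := by
  intro v p θ
  obtain ⟨s₀, x₀, e⟩ := p
  obtain ⟨sv', x', Φ, Ψ, E, hE⟩ :=
    perp_symm h (s₀, v) x₀ ((eqToHom e, θ) : (σ.disp.obj s₀, υ.disp.obj v) ⟶ τ.disp.obj x₀)
  obtain ⟨s', v'⟩ := sv'
  have EA : σ.disp.obj s' = (dl τ).obj x' := congrArg Prod.fst E
  have EB : υ.disp.obj v' = (dr τ).obj x' := congrArg Prod.snd E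
  have hA := congrArg Prod.fst hE
  have hB := congrArg Prod.snd hE
  simp only [comp_fst', comp_snd', eqToHom_fst', eqToHom_snd'] at hA hB
  refine ⟨v', ⟨s', x', EA⟩, Φ.2, ⟨Groupoid.inv Φ.1, Ψ, ?_⟩, EB, ?_⟩
  · show σ.disp.map (Groupoid.inv Φ.1) ≫ eqToHom e = eqToHom EA ≫ (dl τ).map Ψ
    erw [hA]
    simp only [Groupoid.inv_eq_inv, Functor.map_inv]
    erw [IsIso.inv_hom_id_assoc]
    rfl
  · show θ = υ.disp.map Φ.2 ≫ eqToHom EB ≫ (dr τ).map Ψ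
    rw [hB]
    rfl


theorem perp_dl {σ : Prestrat A} {τ : Prestrat (A × B)}
    (h : Perp τ (prodPre σ (idPre B))) : Perp σ (⟨τ.C, dl τ⟩ : Prestrat A) := by
  intro s x θ
  obtain ⟨sb', x', Φ, Ψ, E, hE⟩ :=
    perp_symm h (s, (τ.disp.obj x).2) x
      ((θ, 𝟙 _) : (σ.disp.obj s, (τ.disp.obj x).2) ⟶ τ.disp.obj x)
  obtain ⟨s', b'⟩ := sb'
  have EA : σ.disp.obj s' = (dl τ).obj x' := congrArg Prod.fst E
  have hA := congrArg Prod.fst hE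
  simp only [comp_fst', eqToHom_fst'] at hA
  exact ⟨s', x', Φ.1, Ψ, EA, by rw [hA]; rfl⟩


theorem perp_step2 {σ : Prestrat A} {υ : Prestrat B} {τ : Prestrat (A × B)}
    (hdl : Perp σ (⟨τ.C, dl τ⟩ : Prestrat A))
    (happ : Perp υ (appPre σ τ)) : Perp τ (prodPre σ υ) := by
  intro x sv θ
  obtain ⟨s, v⟩ := sv
  obtain ⟨x₁, s₁, φ₁, ψ₁, e₁, h₁⟩ := perp_symm hdl x s (θ.1 : (dl τ).obj x ⟶ σ.disp.obj s)
  obtain ⟨p₂, v₂, Φ, ψ₂, E, h₂⟩ :=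
    perp_symm happ (⟨s₁, x₁, e₁.symm⟩ : PB σ.disp (dl τ)) v
      (((dr τ).map (Groupoid.inv φ₁) ≫ θ.2 : (dr τ).obj x₁ ⟶ υ.disp.obj v))
  obtain ⟨s₂, x₂, e₂⟩ := p₂
  have h₂' : (dr τ).map (Groupoid.inv φ₁) ≫ θ.2
      = (dr τ).map Φ.r ≫ eqToHom E ≫ υ.disp.map ψ₂ := h₂
  have hcomm : σ.disp.map Φ.l ≫ eqToHom e₂ = eqToHom e₁.symm ≫ (dl τ).map Φ.r := Φ.comm
  refine ⟨x₂, (s₂, v₂), φ₁ ≫ Φ.r, ((Groupoid.inv Φ.l ≫ ψ₁, ψ₂) :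
      ((s₂, v₂) : σ.C × υ.C) ⟶ (s, v)), ?_, ?_⟩
  · exact Prod.ext e₂.symm E
  · have keyA : θ.1 = (dl τ).map (φ₁ ≫ Φ.r) ≫ eqToHom e₂.symm
        ≫ σ.disp.map (Groupoid.inv Φ.l ≫ ψ₁) := by
      have hr : (dl τ).map Φ.r = eqToHom e₁ ≫ σ.disp.map Φ.l ≫ eqToHom e₂ := by
        rw [hcomm]; simp
      rw [h₁, Functor.map_comp, Functor.map_comp, hr]
      simp [Groupoid.inv_eq_inv]
      rfl
    have keyB : θ.2 = (dr τ).map (φ₁ ≫ Φ.r) ≫ eqToHom E ≫ υ.disp.map ψ₂ := by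
      have : θ.2 = (dr τ).map φ₁ ≫ ((dr τ).map (Groupoid.inv φ₁) ≫ θ.2) := by
        erw [← Category.assoc, ← Functor.map_comp, Groupoid.comp_inv, CategoryTheory.Functor.map_id,
          Category.id_comp]
      rw [this, h₂', Functor.map_comp]
      simp
      rfl
    refine Prod.ext ?_ ?_
    · simp only [comp_fst', eqToHom_fst']
      exact keyA
    · simp only [comp_snd', eqToHom_snd']
      exact keyB


/-- The prestrategy on `A` obtained by pulling back `τ` along `υ` on the `B` side. -/
def WPre (τ : Prestrat (A × B)) (υ : Prestrat B) : Prestrat A :=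
  ⟨PB (dr τ) υ.disp, PB.pl (dr τ) υ.disp ⋙ dl τ⟩

theorem perp_W {σ₀ : Prestrat A} {υ : Prestrat B} {τ : Prestrat (A × B)}
    (h : Perp τ (prodPre σ₀ υ)) : Perp σ₀ (WPre τ υ) := by
  intro s q θ
  obtain ⟨x, v, e⟩ := q
  obtain ⟨sv', x', Φ, Ψ, E, hE⟩ :=
    perp_symm h (s, v) x
      ((θ, eqToHom e.symm) : (σ₀.disp.obj s, υ.disp.obj v) ⟶ τ.disp.obj x)
  obtain ⟨s', v'⟩ := sv'
  have EA : σ₀.disp.obj s' = (dl τ).obj x' := congrArg Prod.fst E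
  have EB : υ.disp.obj v' = (dr τ).obj x' := congrArg Prod.snd E
  have hA := congrArg Prod.fst hE
  have hB := congrArg Prod.snd hE
  simp only [comp_fst', comp_snd', eqToHom_fst', eqToHom_snd'] at hA hB
  have hB' : eqToHom e.symm = υ.disp.map Φ.2 ≫ eqToHom EB ≫ (dr τ).map Ψ := hB
  refine ⟨s', ⟨x', v', EB.symm⟩, Φ.1, ⟨Ψ, Groupoid.inv Φ.2, ?_⟩, EA, ?_⟩
  · show (dr τ).map Ψ ≫ eqToHom e = eqToHom EB.symm ≫ υ.disp.map (Groupoid.inv Φ.2)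
    have h3 : υ.disp.map (Groupoid.inv Φ.2) ≫ eqToHom e.symm = eqToHom EB ≫ (dr τ).map Ψ := by
      rw [hB']
      simp [Groupoid.inv_eq_inv]
    have h4 : (dr τ).map Ψ = eqToHom EB.symm ≫ υ.disp.map (Groupoid.inv Φ.2) ≫ eqToHom e.symm := by
      rw [h3]; simp
    rw [h4]; simp
  · exact hA

theorem perp_transfer {σ : Prestrat A} {υ : Prestrat B} {τ : Prestrat (A × B)}
    (hι : Perp τ (prodPre (idPre A) υ)) (hW : Perp (WPre τ υ) σ) :
    Perp τ (prodPre σ υ) := by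
  intro x sv θ
  obtain ⟨s, v⟩ := sv
  obtain ⟨x₁, av₁, φ₁, Ψ₁, E₁, h₁⟩ :=
    hι x ((τ.disp.obj x).1, v)
      ((𝟙 _, θ.2) : τ.disp.obj x ⟶ ((τ.disp.obj x).1, υ.disp.obj v))
  obtain ⟨a₁, v₁⟩ := av₁
  have e₁ : (dr τ).obj x₁ = υ.disp.obj v₁ := congrArg Prod.snd E₁
  have hB₁ := congrArg Prod.snd h₁
  simp only [comp_snd', eqToHom_snd'] at hB₁
  have hB₁' : θ.2 = (dr τ).map φ₁ ≫ eqToHom e₁ ≫ υ.disp.map Ψ₁.2 := hB₁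
  obtain ⟨q₂, s₂, Φ, ψσ, e₀, hA₂⟩ :=
    hW (⟨x₁, v₁, e₁⟩ : PB (dr τ) υ.disp) s
      (((dl τ).map (Groupoid.inv φ₁) ≫ θ.1 : (dl τ).obj x₁ ⟶ σ.disp.obj s))
  obtain ⟨x₂, v₂, e₂⟩ := q₂
  have hA₂' : (dl τ).map (Groupoid.inv φ₁) ≫ θ.1
      = (dl τ).map Φ.l ≫ eqToHom e₀ ≫ σ.disp.map ψσ := hA₂
  have hcomm : (dr τ).map Φ.l ≫ eqToHom e₂ = eqToHom e₁ ≫ υ.disp.map Φ.r := Φ.comm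
  refine ⟨x₂, (s₂, v₂), φ₁ ≫ Φ.l,
    ((ψσ, Groupoid.inv Φ.r ≫ Ψ₁.2) : ((s₂, v₂) : σ.C × υ.C) ⟶ (s, v)),
    Prod.ext e₀ e₂, ?_⟩
  have keyA : θ.1 = (dl τ).map (φ₁ ≫ Φ.l) ≫ eqToHom e₀ ≫ σ.disp.map ψσ := by
    have h0 : θ.1 = (dl τ).map φ₁ ≫ ((dl τ).map (Groupoid.inv φ₁) ≫ θ.1) := by
      erw [← Category.assoc, ← Functor.map_comp, Groupoid.comp_inv, CategoryTheory.Functor.map_id,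
        Category.id_comp]
    rw [h0, hA₂', Functor.map_comp]
    simp
    rfl
  have keyB : θ.2 = (dr τ).map (φ₁ ≫ Φ.l) ≫ eqToHom e₂
      ≫ υ.disp.map (Groupoid.inv Φ.r ≫ Ψ₁.2) := by
    have hr : (dr τ).map Φ.l ≫ eqToHom e₂ ≫ υ.disp.map (Groupoid.inv Φ.r) = eqToHom e₁ := by
      rw [← Category.assoc, hcomm]
      simp [Groupoid.inv_eq_inv]
    rw [hB₁', ← hr, Functor.map_comp, Functor.map_comp]
    simp
    rfl
  refine Prod.ext ?_ ?_
  · simp only [comp_fst', eqToHom_fst']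
    exact keyA
  · simp only [comp_snd', eqToHom_snd']
    exact keyB


/-- Characterization of uniform prestrategies from `A` to `B` (Proposition `carac_lin`). -/
theorem carac_lin
    {A B : Type u} [Groupoid.{u} A] [Groupoid.{u} B]
    (UA : Set (Prestrat A)) (UB : Set (Prestrat B))
    (hUA : perpSet (perpSet UA) = UA) (hUB : perpSet (perpSet UB) = UB)
    (τ : Prestrat (A × B)) (Ss : Set (Prestrat A))
    (hs : Ss ⊆ UA) (hid : idPre A ∈ Ss) (hgen : perpSet (perpSet Ss) = UA) :
    τ ∈ ULin UA UB ↔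
      (∀ σ ∈ Ss, appPre σ τ ∈ UB) ∧ ((⟨τ.C, dl τ⟩ : Prestrat A) ∈ perpSet UA) := by
  constructor
  · intro h
    refine ⟨fun σ hσ => ?_, fun σ hσ => ?_⟩
    · rw [← hUB]
      intro υ hυ
      exact perp_app (h σ (hs hσ) υ hυ)
    · exact perp_dl (h σ hσ (idPre B) (fun υ' _ => perp_id υ'))
  · rintro ⟨h1, h2⟩ σ hσ υ hυ
    have step2 : ∀ σ₀ ∈ Ss, Perp τ (prodPre σ₀ υ) := by
      intro σ₀ h₀
      have happ : Perp υ (appPre σ₀ τ) := by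
        have hm := h1 σ₀ h₀
        rw [← hUB] at hm
        exact hm υ hυ
      exact perp_step2 (h2 σ₀ (hs h₀)) happ
    have hW : WPre τ υ ∈ perpSet Ss := fun σ₀ h₀ => perp_W (step2 σ₀ h₀)
    rw [← hgen] at hσ
    exact perp_transfer (step2 (idPre A) hid) (hσ (WPre τ υ) hW)

end ThinSpan
end

section
/- For every uniform groupoid (A, U_A): the prestrategy (A, id_A) belongs both to U_A and to U_A⊥; moreover, the identity span on A, i.e. the prestrategy (A, ⟨id_A, id_A⟩ : A ⥤ A × A) from A to A, belongs to U_{A⊸A}. -/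
open CategoryTheory

universe u

namespace ThinSpan

lemma eqToHom_fst'_s6 {C D : Type u} [Category.{u} C] [Category.{u} D] {p q : C × D}
    (h : p = q) : (eqToHom h).1 = eqToHom (congrArg Prod.fst h) := by cases h; rfl

lemma eqToHom_snd'_s6 {C D : Type u} [Category.{u} C] [Category.{u} D] {p q : C × D}
    (h : p = q) : (eqToHom h).2 = eqToHom (congrArg Prod.snd h) := by cases h; rfl

lemma bipullback_id_right {A : Type u} [Groupoid.{u} A] (σ : Prestrat A) :
    BipullbackCond σ.disp (𝟭 A) := by
  intro s t θ
  exact ⟨s, σ.disp.obj s, 𝟙 s, θ, rfl, by simp⟩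

/-- For a uniform groupoid `(A, U_A)`, the identity prestrategy belongs to `U_A` and to
`U_A ⊥`, and the identity span belongs to `U_{A ⊸ A}`. -/
theorem id_uniform
    {A : Type u} [Groupoid.{u} A]
    (UA : Set (Prestrat A)) (hUA : perpSet (perpSet UA) = UA) :
    idPre A ∈ UA ∧ idPre A ∈ perpSet UA ∧ idSpan A ∈ ULin UA UA := by
  refine ⟨?_, ?_, ?_⟩
  · rw [← hUA]
    intro τ _
    exact bipullback_id_right τ
  · intro σ _
    exact bipullback_id_right σ
  · intro σ hσ υ hυ
    have hperp : BipullbackCond σ.disp υ.disp := hυ σ hσ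
    intro s t θ
    obtain ⟨t₁', t₂', φ, ψ, e, hθ⟩ :=
      hperp t.1 t.2 (Groupoid.inv θ.1 ≫ θ.2)
    have h1 : ((idSpan A).disp.obj (σ.disp.obj t₁') : A × A)
        = (prodPre σ υ).disp.obj (t₁', t₂') :=
      congrArg (Prod.mk (σ.disp.obj t₁')) e
    refine ⟨σ.disp.obj t₁', (t₁', t₂'), θ.1 ≫ σ.disp.map φ,
      (Groupoid.inv φ, ψ), h1, ?_⟩
    apply Prod.ext
    · show θ.1 = (θ.1 ≫ σ.disp.map φ) ≫ (eqToHom h1).1 ≫ σ.disp.map (Groupoid.inv φ)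
      have h2 : (eqToHom h1).1 = 𝟙 (σ.disp.obj t₁') := by
        rw [eqToHom_fst'_s6]; rfl
      erw [h2, Category.id_comp, Category.assoc, ← σ.disp.map_comp]
      erw [Groupoid.comp_inv, σ.disp.map_id]
      exact (Category.comp_id θ.1).symm
    · show θ.2 = (θ.1 ≫ σ.disp.map φ) ≫ (eqToHom h1).2 ≫ υ.disp.map ψ
      rw [eqToHom_snd'_s6]
      have : eqToHom (congrArg Prod.snd h1) = eqToHom e := rfl
      erw [this, Category.assoc, ← hθ]
      erw [← Category.assoc, Groupoid.comp_inv, Category.id_comp]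

end ThinSpan
end

section
/- Let (A, U_A), (B, U_B), (C, U_C) be uniform groupoids, S ∈ U_{A⊸B} and T ∈ U_{B⊸C}. Then the prestrategy (S, ∂S_B) on B belongs to U_B and the prestrategy (T, ∂T_B) on B belongs to U_B⊥. Consequently the cospan (∂S_B : S ⥤ B, ∂T_B : T ⥤ B) satisfies the bipullback condition; that is, the pullback used to compose S and T is also a bipullback. -/
open CategoryTheory

universe u

namespace ThinSpan

section Aux

variable {A B : Type u} [Groupoid.{u} A] [Groupoid.{u} B]

theorem idPre_mem_perpSet (X : Set (Prestrat A)) : idPre A ∈ perpSet X := by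
  intro σ _ s a θ
  exact ⟨s, σ.disp.obj s, 𝟙 s, θ, rfl, by simp [idPre]; rfl⟩

end Aux

/-- The legs of composable uniform prestrategies are orthogonal, hence the composition
pullback is a bipullback. -/
theorem composition_pullback_is_bipullback
    {A B C : Type u} [Groupoid.{u} A] [Groupoid.{u} B] [Groupoid.{u} C]
    (UA : Set (Prestrat A)) (UB : Set (Prestrat B)) (UC : Set (Prestrat C))
    (hUA : perpSet (perpSet UA) = UA) (hUB : perpSet (perpSet UB) = UB)
    (hUC : perpSet (perpSet UC) = UC)
    (σ : Prestrat (A × B)) (τ : Prestrat (B × C))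
    (hσ : σ ∈ ULin UA UB) (hτ : τ ∈ ULin UB UC) :
    ((⟨σ.C, dr σ⟩ : Prestrat B) ∈ UB) ∧ ((⟨τ.C, dl τ⟩ : Prestrat B) ∈ perpSet UB) ∧
      BipullbackCond (dr σ) (dl τ) := by
  have hidA : idPre A ∈ UA := by
    rw [← hUA]; exact idPre_mem_perpSet _
  have hidC : idPre C ∈ perpSet UC := idPre_mem_perpSet _
  -- (σ.C, dr σ) ∈ UB
  have h1 : (⟨σ.C, dr σ⟩ : Prestrat B) ∈ UB := by
    rw [← hUB]
    intro υ hυ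
    apply perp_symm
    intro x y θ
    obtain ⟨x', yt', φ, ψ, e, he⟩ :=
      hσ (idPre A) hidA υ hυ x ⟨(σ.disp.obj x).1, y⟩ ⟨𝟙 _, θ⟩
    refine ⟨x', yt'.2, φ, ψ.2, congrArg Prod.snd e, ?_⟩
    have := congrArg Prod.snd he
    refine this.trans ?_
    change (σ.disp.map φ).2 ≫ (eqToHom e).2 ≫ υ.disp.map ψ.2 = _
    rw [eqToHom_snd']
    rfl
  -- (τ.C, dl τ) ∈ perpSet UB
  have h2 : (⟨τ.C, dl τ⟩ : Prestrat B) ∈ perpSet UB := by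
    intro ρ hρ
    apply perp_symm
    intro x y θ
    obtain ⟨x', yt', φ, ψ, e, he⟩ :=
      hτ ρ hρ (idPre C) hidC x ⟨y, (τ.disp.obj x).2⟩ ⟨θ, 𝟙 _⟩
    refine ⟨x', yt'.1, φ, ψ.1, congrArg Prod.fst e, ?_⟩
    have := congrArg Prod.fst he
    refine this.trans ?_
    change (τ.disp.map φ).1 ≫ (eqToHom e).1 ≫ ρ.disp.map ψ.1 = _
    rw [eqToHom_fst']
    rfl
  exact ⟨h1, h2, h2 _ h1⟩

end ThinSpan
end

section
/- Let A be a thin groupoid. Then: (a) if a morphism θ : a → a' of A belongs to both A₋ and A₊, then a = a' and θ is the identity; (b) for every morphism θ : a → a' of A there exist a unique object a'' of A and unique morphisms θ₋ : a → a'' in A₋ and θ₊ : a'' → a' in A₊ such that θ = θ₊ ∘ θ₋. -/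
open CategoryTheory

universe u

namespace ThinSpan

theorem WideSub.mem_eqToHom {A : Type u} [Groupoid.{u} A] (W : WideSub A)
    {a b : A} (h : a = b) : W.mem (eqToHom h) := by
  subst h
  rw [eqToHom_refl]
  exact W.id_mem a

/-- Properties of the polarized symmetries of a thin groupoid: a symmetry that is both
negative and positive is an identity, and every symmetry factors uniquely as a negative
symmetry followed by a positive one. -/
theorem thin_groupoid_polarities
    {A : Type u} [Groupoid.{u} A]
    (Aneg Apos : WideSub A) (UA TA : Set (Prestrat A))
    (hUA : perpSet (perpSet UA) = UA)
    (hTU : TA ⊆ UA)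
    (hTA : tperpSet (perpSet UA) (tperpSet UA TA) = TA)
    (hneg : Aneg.pre ∈ TA) (hpos : Apos.pre ∈ tperpSet UA TA) :
    (∀ {a a' : A} (θ : a ⟶ a'), Aneg.mem θ → Apos.mem θ →
      ∃ h : a = a', θ = eqToHom h) ∧
    (∀ {a a' : A} (θ : a ⟶ a'),
      ∃! w : Σ a'' : A, (a ⟶ a'') × (a'' ⟶ a'),
        Aneg.mem w.2.1 ∧ Apos.mem w.2.2 ∧ θ = w.2.1 ≫ w.2.2) := by
  obtain ⟨hBP, hD⟩ : TPerp Aneg.pre Apos.pre := hpos.2 Aneg.pre hneg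
  -- (a) a morphism both negative and positive is an identity
  have part_a : ∀ {a a' : A} (θ : a ⟶ a'), Aneg.mem θ → Apos.mem θ →
      ∃ h : a = a', θ = eqToHom h := by
    intro a a' θ hn hp
    let x : PB Aneg.pre.disp Apos.pre.disp := ⟨⟨a⟩, ⟨a⟩, rfl⟩
    let y : PB Aneg.pre.disp Apos.pre.disp := ⟨⟨a'⟩, ⟨a'⟩, rfl⟩
    let u : x ⟶ y := ⟨⟨θ, hn⟩, ⟨θ, hp⟩, by
      exact (Category.comp_id θ).trans (Category.id_comp θ).symm⟩
    obtain ⟨h, hu⟩ := hD u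
    have ha : a = a' := congrArg (fun z => z.s.pt) h
    subst ha
    refine ⟨rfl, ?_⟩
    rw [Subsingleton.elim h rfl] at hu
    have := congrArg PB.Hom.l hu
    simp only [eqToHom_refl, PB.id_l] at this
    have := congrArg Subtype.val this
    exact this
  refine ⟨part_a, ?_⟩
  intro a a' θ
  -- existence from the bipullback condition
  obtain ⟨s', t', φ, ψ, e, hθ⟩ := hBP ⟨a⟩ ⟨a'⟩ θ
  have e' : s'.pt = t'.pt := e
  refine ⟨⟨s'.pt, φ.1, eqToHom e' ≫ ψ.1⟩, ⟨φ.2,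
    Apos.comp_mem (Apos.mem_eqToHom e') ψ.2, by exact hθ⟩, ?_⟩
  -- uniqueness from discreteness of the pullback
  rintro ⟨a₂, n₂, p₂⟩ ⟨hn₂, hp₂, hθ₂⟩
  set a₁ := s'.pt
  set n₁ : a ⟶ a₁ := φ.1 with hn1def
  set p₁ : a₁ ⟶ a' := eqToHom e' ≫ ψ.1 with hp1def
  have hn₁ : Aneg.mem n₁ := φ.2
  have hp₁ : Apos.mem p₁ := Apos.comp_mem (Apos.mem_eqToHom e') ψ.2
  have hθ₁ : θ = n₁ ≫ p₁ := by exact hθ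
  have hfac : n₂ ≫ p₂ = n₁ ≫ p₁ := hθ₂.symm.trans hθ₁
  let x : PB Aneg.pre.disp Apos.pre.disp := ⟨⟨a₂⟩, ⟨a₂⟩, rfl⟩
  let y : PB Aneg.pre.disp Apos.pre.disp := ⟨⟨a₁⟩, ⟨a₁⟩, rfl⟩
  have comm : (Groupoid.inv n₂ ≫ n₁) = p₂ ≫ Groupoid.inv p₁ := by
    rw [Groupoid.inv_eq_inv, Groupoid.inv_eq_inv, IsIso.inv_comp_eq, ← Category.assoc,
      hfac]
    simp
  let u : x ⟶ y := ⟨⟨Groupoid.inv n₂ ≫ n₁, Aneg.comp_mem (Aneg.inv_mem hn₂) hn₁⟩,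
    ⟨p₂ ≫ Groupoid.inv p₁, Apos.comp_mem hp₂ (Apos.inv_mem hp₁)⟩,
    by exact (Category.comp_id _).trans (comm.trans (Category.id_comp _).symm)⟩
  obtain ⟨h, hu⟩ := hD u
  have ha : a₂ = a₁ := congrArg (fun z => z.s.pt) h
  subst ha
  rw [Subsingleton.elim h rfl] at hu
  have hl := congrArg Subtype.val (congrArg PB.Hom.l hu)
  have hr := congrArg Subtype.val (congrArg PB.Hom.r hu)
  simp only [eqToHom_refl, PB.id_l, PB.id_r] at hl hr
  have hn : n₂ = n₁ := by
    have : Groupoid.inv n₂ ≫ n₁ = 𝟙 a₁ := hl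
    rw [Groupoid.inv_eq_inv, IsIso.inv_comp_eq, Category.comp_id] at this
    exact this.symm
  have hp : p₂ = p₁ := by
    have : p₂ ≫ Groupoid.inv p₁ = 𝟙 a₁ := hr
    rw [Groupoid.inv_eq_inv, IsIso.comp_inv_eq, Category.id_comp] at this
    exact this
  simp only [hn, hp]
  rfl

end ThinSpan
end

section
/- Let A, B, C be polarized uniform groupoids, S ∈ U_{A⊸B} and T ∈ U_{B⊸C}, and suppose the composition T ⊙ S is thin as a prestrategy on A ⊸ C, i.e. every morphism (φ, ψ) of the pullback groupoid T ⊙ S such that ∂S_A(φ) ∈ A₋ and ∂T_C(ψ) ∈ C₊ is an identity. Then every reindexing problem — a triple of an object s of S, an object t of T, and a morphism θ : ∂S_B(s) → ∂T_B(t) of B — has at most one positive solution, where a solution is a pair of morphisms φ : s → s' in S and ψ : t' → t in T with ∂S_B(s') = ∂T_B(t') and ∂T_B(ψ) ∘ ∂S_B(φ) = θ, and a solution is positive when ∂S_A(φ) ∈ A₋ and ∂T_C(ψ) ∈ C₊. -/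
/-!
Two positive solutions `(φ₁, ψ₁)` and `(φ₂, ψ₂)` of the same reindexing problem differ by the
morphism `(φ₁⁻¹ ≫ φ₂, ψ₁ ≫ ψ₂⁻¹)` of the pullback groupoid `τ ⊙ σ`. Since `A₋` and `C₊` are
closed under inverses and composition, this morphism is positive, so thinness makes it an
identity, which forces the two solutions to coincide.
-/

open CategoryTheory

universe u

namespace ThinSpan

def WideSub.comap {A X : Type u} [Groupoid.{u} A] [Groupoid.{u} X] (W : WideSub A) (F : X ⥤ A) :
    WideSub X where
  mem φ := W.mem (F.map φ)
  id_mem x := by simpa only [F.map_id] using W.id_mem (F.obj x)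
  comp_mem hf hg := by simpa only [F.map_comp] using W.comp_mem hf hg
  inv_mem hf := by
    simpa only [Groupoid.inv_eq_inv, Functor.map_inv] using W.inv_mem hf

variable {S T B : Type u} [Groupoid.{u} S] [Groupoid.{u} T] [Groupoid.{u} B]

def PB.homOfSolutions {f : S ⥤ B} {g : T ⥤ B} {s : S} {t : T} {θ : f.obj s ⟶ g.obj t}
    {s'₁ : S} {t'₁ : T} {φ₁ : s ⟶ s'₁} {ψ₁ : t'₁ ⟶ t} {e₁ : f.obj s'₁ = g.obj t'₁}
    (hθ₁ : θ = f.map φ₁ ≫ eqToHom e₁ ≫ g.map ψ₁)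
    {s'₂ : S} {t'₂ : T} {φ₂ : s ⟶ s'₂} {ψ₂ : t'₂ ⟶ t} {e₂ : f.obj s'₂ = g.obj t'₂}
    (hθ₂ : θ = f.map φ₂ ≫ eqToHom e₂ ≫ g.map ψ₂) :
    (⟨s'₁, t'₁, e₁⟩ : PB f g) ⟶ ⟨s'₂, t'₂, e₂⟩ where
  l := Groupoid.inv φ₁ ≫ φ₂
  r := ψ₁ ≫ Groupoid.inv ψ₂
  comm := by
    simp only [Groupoid.inv_eq_inv, Functor.map_comp, Functor.map_inv, Category.assoc,
      IsIso.inv_comp_eq]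
    simp only [← Category.assoc, IsIso.eq_comp_inv]
    simpa only [Category.assoc] using hθ₂.symm.trans hθ₁

theorem solution_unique_of_thin {f : S ⥤ B} {g : T ⥤ B} (WS : WideSub S) (WT : WideSub T)
    (hthin : ∀ (x y : PB f g) (u : x ⟶ y), WS.mem u.l → WT.mem u.r →
      ∃ h : x = y, u = eqToHom h)
    {s : S} {t : T} {θ : f.obj s ⟶ g.obj t}
    {s'₁ : S} {t'₁ : T} {φ₁ : s ⟶ s'₁} {ψ₁ : t'₁ ⟶ t} {e₁ : f.obj s'₁ = g.obj t'₁}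
    (hθ₁ : θ = f.map φ₁ ≫ eqToHom e₁ ≫ g.map ψ₁) (hφ₁ : WS.mem φ₁) (hψ₁ : WT.mem ψ₁)
    {s'₂ : S} {t'₂ : T} {φ₂ : s ⟶ s'₂} {ψ₂ : t'₂ ⟶ t} {e₂ : f.obj s'₂ = g.obj t'₂}
    (hθ₂ : θ = f.map φ₂ ≫ eqToHom e₂ ≫ g.map ψ₂) (hφ₂ : WS.mem φ₂) (hψ₂ : WT.mem ψ₂) :
    s'₁ = s'₂ ∧ t'₁ = t'₂ ∧ HEq φ₁ φ₂ ∧ HEq ψ₁ ψ₂ := by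
  obtain ⟨h, hu⟩ := hthin _ _ (PB.homOfSolutions hθ₁ hθ₂)
    (WS.comp_mem (WS.inv_mem hφ₁) hφ₂) (WT.comp_mem hψ₁ (WT.inv_mem hψ₂))
  cases h
  have hl : Groupoid.inv φ₁ ≫ φ₂ = 𝟙 s'₁ := congrArg PB.Hom.l hu
  have hr : ψ₁ ≫ Groupoid.inv ψ₂ = 𝟙 t'₁ := congrArg PB.Hom.r hu
  rw [Groupoid.inv_eq_inv, inv_comp_eq_id] at hl
  rw [Groupoid.inv_eq_inv, comp_inv_eq_id] at hr
  exact ⟨rfl, rfl, heq_of_eq hl.symm, heq_of_eq hr⟩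

theorem unique_positive_reindexing_general
    {A B C : Type u} [Groupoid.{u} A] [Groupoid.{u} B] [Groupoid.{u} C]
    (Aneg : WideSub A) (Cpos : WideSub C)
    (σ : Prestrat (A × B)) (τ : Prestrat (B × C))
    -- `τ ⊙ σ` is thin as a prestrategy on `A ⊸ C`:
    (hthin : ∀ (x y : PB (dr σ) (dl τ)) (u : x ⟶ y),
      Aneg.mem ((dl σ).map ((PB.pl (dr σ) (dl τ)).map u)) →
      Cpos.mem ((dr τ).map ((PB.pr (dr σ) (dl τ)).map u)) →
      ∃ h : x = y, u = eqToHom h) :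
    ∀ (s : σ.C) (t : τ.C) (θ : (dr σ).obj s ⟶ (dl τ).obj t)
      (s'₁ : σ.C) (t'₁ : τ.C) (φ₁ : s ⟶ s'₁) (ψ₁ : t'₁ ⟶ t)
      (e₁ : (dr σ).obj s'₁ = (dl τ).obj t'₁),
      θ = (dr σ).map φ₁ ≫ eqToHom e₁ ≫ (dl τ).map ψ₁ →
      Aneg.mem ((dl σ).map φ₁) → Cpos.mem ((dr τ).map ψ₁) →
      ∀ (s'₂ : σ.C) (t'₂ : τ.C) (φ₂ : s ⟶ s'₂) (ψ₂ : t'₂ ⟶ t)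
        (e₂ : (dr σ).obj s'₂ = (dl τ).obj t'₂),
        θ = (dr σ).map φ₂ ≫ eqToHom e₂ ≫ (dl τ).map ψ₂ →
        Aneg.mem ((dl σ).map φ₂) → Cpos.mem ((dr τ).map ψ₂) →
        s'₁ = s'₂ ∧ t'₁ = t'₂ ∧ HEq φ₁ φ₂ ∧ HEq ψ₁ ψ₂ :=
  fun _ _ _ _ _ _ _ _ hθ₁ hφ₁ hψ₁ _ _ _ _ _ hθ₂ hφ₂ hψ₂ =>
    solution_unique_of_thin (Aneg.comap (dl σ)) (Cpos.comap (dr τ)) hthin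
      hθ₁ hφ₁ hψ₁ hθ₂ hφ₂ hψ₂

/-- If the composition of two uniform prestrategies is thin, then every reindexing
problem has at most one positive solution. -/
theorem unique_positive_reindexing
    {A B C : Type u} [Groupoid.{u} A] [Groupoid.{u} B] [Groupoid.{u} C]
    (Aneg Apos : WideSub A) (Bneg Bpos : WideSub B) (Cneg Cpos : WideSub C)
    (UA : Set (Prestrat A)) (UB : Set (Prestrat B)) (UC : Set (Prestrat C))
    (hUA : perpSet (perpSet UA) = UA) (hUB : perpSet (perpSet UB) = UB)
    (hUC : perpSet (perpSet UC) = UC)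
    (σ : Prestrat (A × B)) (τ : Prestrat (B × C))
    (hσ : σ ∈ ULin UA UB) (hτ : τ ∈ ULin UB UC)
    -- `τ ⊙ σ` is thin as a prestrategy on `A ⊸ C`:
    (hthin : ∀ (x y : PB (dr σ) (dl τ)) (u : x ⟶ y),
      Aneg.mem ((dl σ).map ((PB.pl (dr σ) (dl τ)).map u)) →
      Cpos.mem ((dr τ).map ((PB.pr (dr σ) (dl τ)).map u)) →
      ∃ h : x = y, u = eqToHom h) :
    ∀ (s : σ.C) (t : τ.C) (θ : (dr σ).obj s ⟶ (dl τ).obj t)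
      (s'₁ : σ.C) (t'₁ : τ.C) (φ₁ : s ⟶ s'₁) (ψ₁ : t'₁ ⟶ t)
      (e₁ : (dr σ).obj s'₁ = (dl τ).obj t'₁),
      θ = (dr σ).map φ₁ ≫ eqToHom e₁ ≫ (dl τ).map ψ₁ →
      Aneg.mem ((dl σ).map φ₁) → Cpos.mem ((dr τ).map ψ₁) →
      ∀ (s'₂ : σ.C) (t'₂ : τ.C) (φ₂ : s ⟶ s'₂) (ψ₂ : t'₂ ⟶ t)
        (e₂ : (dr σ).obj s'₂ = (dl τ).obj t'₂),
        θ = (dr σ).map φ₂ ≫ eqToHom e₂ ≫ (dl τ).map ψ₂ →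
        Aneg.mem ((dl σ).map φ₂) → Cpos.mem ((dr τ).map ψ₂) →
        s'₁ = s'₂ ∧ t'₁ = t'₂ ∧ HEq φ₁ φ₂ ∧ HEq ψ₁ ψ₂ :=
  unique_positive_reindexing_general Aneg Cpos σ τ hthin

end ThinSpan
end

section
/- Let A be a groupoid with a wide subgroupoid A₊ of positive morphisms, and let (S, ∂S) and (T, ∂T) be prestrategies on A with T thin, i.e. every morphism ψ of T with ∂T(ψ) ∈ A₊ is an identity. Let (F, φ) and (G, ψ) be positive weak morphisms from S to T, i.e. functors F, G : S ⥤ T together with natural isomorphisms φ : ∂S ⟶ ∂T ∘ F and ψ : ∂S ⟶ ∂T ∘ G all of whose components lie in A₊. Then every natural transformation μ : F ⟶ G satisfying ψ_s = ∂T(μ_s) ∘ φ_s for all objects s of S has all components identities; in particular F = G and φ = ψ. -/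
open CategoryTheory

universe u

namespace ThinSpan.WideSub

variable {A : Type u} [Groupoid.{u} A] (W : WideSub A)

theorem comp_mem_cancel_left {a b c : A} {f : a ⟶ b} {g : b ⟶ c} (hf : W.mem f) :
    W.mem (f ≫ g) ↔ W.mem g := by
  refine ⟨fun hfg => ?_, W.comp_mem hf⟩
  have hg : g = Groupoid.inv f ≫ f ≫ g := by simp [Groupoid.inv_eq_inv]
  exact hg ▸ W.comp_mem (W.inv_mem hf) hfg

end ThinSpan.WideSub

namespace ThinSpan

/-- Two positive weak morphisms into a thin prestrategy related by a `2`-cell are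
equal, and the `2`-cell is the identity. -/
theorem positive_weak_morphisms_rigid
    {A : Type u} [Groupoid.{u} A] (Apos : WideSub A)
    (σ τ : Prestrat A)
    (hthin : ∀ {x y : τ.C} (ψ : x ⟶ y), Apos.mem (τ.disp.map ψ) →
      ∃ h : x = y, ψ = eqToHom h)
    (F G : σ.C ⥤ τ.C)
    (φ : σ.disp ⟶ F ⋙ τ.disp) (ψ : σ.disp ⟶ G ⋙ τ.disp)
    (hφ : ∀ s : σ.C, Apos.mem (φ.app s)) (hψ : ∀ s : σ.C, Apos.mem (ψ.app s))
    (μ : F ⟶ G) (hμ : ∀ s : σ.C, ψ.app s = φ.app s ≫ τ.disp.map (μ.app s)) :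
    (∀ s : σ.C, ∃ h : F.obj s = G.obj s, μ.app s = eqToHom h) ∧ F = G ∧ HEq φ ψ := by
  have hμ_eqToHom : ∀ s, ∃ h : F.obj s = G.obj s, μ.app s = eqToHom h := fun s =>
    hthin (μ.app s) ((Apos.comp_mem_cancel_left (hφ s)).mp (hμ s ▸ hψ s))
  choose hobj happ using hμ_eqToHom
  have : IsIso μ := NatIso.isIso_of_isIso_app μ
  have hFG : F = G := Functor.ext_of_iso (asIso μ) hobj happ
  refine ⟨fun s => ⟨hobj s, happ s⟩, hFG, ?_⟩
  subst hFG
  exact heq_of_eq (NatTrans.ext (funext fun s => by simp [hμ s, happ s]))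

end ThinSpan
end

section
/- Let A be a groupoid with a wide subgroupoid A₊ of positive morphisms, and let (S, ∂S) be a thin prestrategy on A (every morphism φ of S with ∂S(φ) ∈ A₊ is an identity) such that the cospan (∂S : S ⥤ A, inclusion : A₊ ⥤ A) satisfies the bipullback condition. Then for every object s of S, every object a of A and every morphism θ : ∂S(s) → a of A, there exist a unique morphism φ : s → s' of S and a unique morphism θ₊ : ∂S(s') → a lying in A₊ such that θ = θ₊ ∘ ∂S(φ). -/
open CategoryTheory

universe u

namespace ThinSpan

/-- Unique positive decomposition of a symmetry along a thin prestrategy. -/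
theorem unique_positive_factorization
    {A : Type u} [Groupoid.{u} A] (Apos : WideSub A) (σ : Prestrat A)
    (hthin : ∀ {x y : σ.C} (φ : x ⟶ y), Apos.mem (σ.disp.map φ) →
      ∃ h : x = y, φ = eqToHom h)
    (hbp : BipullbackCond σ.disp Apos.incl) :
    ∀ (s : σ.C) (a : A) (θ : σ.disp.obj s ⟶ a),
      ∃! w : Σ s' : σ.C, (s ⟶ s') × (σ.disp.obj s' ⟶ a),
        Apos.mem w.2.2 ∧ θ = σ.disp.map w.2.1 ≫ w.2.2 := by
  intro s a θ
  obtain ⟨s', t', φ, ψ, e, hdec⟩ := hbp s ⟨a⟩ θ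
  have hmem : Apos.mem (eqToHom e ≫ ψ.1 : σ.disp.obj s' ⟶ a) := by
    have h1 : ∀ {x y : A} (e' : x = y), Apos.mem (eqToHom e') := by
      rintro x y rfl; simpa using Apos.id_mem x
    exact Apos.comp_mem (h1 e) ψ.2
  have key : ∀ (y₁ y₂ : Σ s' : σ.C, (s ⟶ s') × (σ.disp.obj s' ⟶ a)),
      (Apos.mem y₁.2.2 ∧ θ = σ.disp.map y₁.2.1 ≫ y₁.2.2) →
      (Apos.mem y₂.2.2 ∧ θ = σ.disp.map y₂.2.1 ≫ y₂.2.2) → y₁ = y₂ := by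
    rintro ⟨s₁, φ₁, θ₁⟩ ⟨s₂, φ₂, θ₂⟩ ⟨m₁, h₁⟩ ⟨m₂, h₂⟩
    have hφ : σ.disp.map φ₁ ≫ θ₁ = σ.disp.map φ₂ ≫ θ₂ := h₁ ▸ h₂
    have hc : σ.disp.map (Groupoid.inv φ₁ ≫ φ₂) = θ₁ ≫ Groupoid.inv θ₂ := by
      rw [Functor.map_comp, Groupoid.inv_eq_inv, Groupoid.inv_eq_inv, Functor.map_inv,
        IsIso.inv_comp_eq, ← Category.assoc, hφ, Category.assoc, IsIso.hom_inv_id,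
        Category.comp_id]
    have hmemc : Apos.mem (σ.disp.map (Groupoid.inv φ₁ ≫ φ₂)) := by
      rw [hc]; exact Apos.comp_mem m₁ (Apos.inv_mem m₂)
    obtain ⟨h, hch⟩ := hthin _ hmemc
    subst h
    simp only [eqToHom_refl] at hch
    have hφeq : φ₂ = φ₁ := by
      have := congrArg (φ₁ ≫ ·) hch
      simp only [← Category.assoc, Groupoid.comp_inv, Category.id_comp, Category.comp_id] at this
      exact this
    subst hφeq
    have hθeq : θ₁ = θ₂ := by
      have := hφ
      rwa [cancel_epi] at this
    rw [hθeq]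
  refine ⟨⟨s', φ, eqToHom e ≫ ψ.1⟩, ⟨hmem, by exact hdec⟩, ?_⟩
  intro y hy
  exact key y ⟨s', φ, eqToHom e ≫ ψ.1⟩ hy ⟨hmem, by exact hdec⟩


end ThinSpan
end
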